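/- arXiv:1006.4381 — 3 statements merged into one kernel-verified Lean document; each statement's English description precedes it below -/
import Mathlib

section
/- Let R be a Dedekind domain, Λ an R-order in a finite-dimensional semisimple algebra over the fraction field of R, and M, N two Λ-lattices in the same genus (M_𝔭 ≅ N_𝔭 as Λ_𝔭-modules for all maximal ideals 𝔭 of R). Then for any nonzero ideal 𝔞 of R there exists an injective Λ-module homomorphism φ : M → N such that 𝔞 + ann_R(coker φ) = R. -/
/-!
Take a finite set `T` of maximal ideals containing all those above `𝔞` and one more, `𝔭₀`, and for
`𝔭 ∈ T` maps `f_𝔭 : M → N`, `g_𝔭 : N → M` whose composites are multiplication by `s_𝔭 ∉ 𝔭`.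
If `e_𝔭 ∉ 𝔭` lies in every other ideal of `T`, then `φ = ∑ e_𝔭 f_𝔭` satisfies
`φ g_𝔭 ≡ e_𝔭 s_𝔭 (mod 𝔭 N)`, so `coker φ = 𝔭 coker φ` and, by Nakayama, the annihilator of
`coker φ` is not contained in `𝔭`. This gives `𝔞 + ann (coker φ) = R`, and also a nonzero `c` with
`c M ⊆ g_𝔭₀ φ M`; Fitting's lemma for the endomorphism `g_𝔭₀ φ` of the Noetherian torsion-free
module `M` then makes `φ` injective.
-/

open Submodule

variable {R : Type*} [CommRing R]

theorem IsDedekindDomain.finite_setOf_isMaximal_le [IsDedekindDomain R] {𝔞 : Ideal R}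
    (h𝔞 : 𝔞 ≠ ⊥) : {𝔭 : Ideal R | 𝔭.IsMaximal ∧ 𝔞 ≤ 𝔭}.Finite := by
  refine ((Ideal.finite_factors h𝔞).image (·.asIdeal)).subset ?_
  rintro 𝔭 ⟨h𝔭, hle⟩
  have hne : 𝔭 ≠ ⊥ := fun h => h𝔞 (le_bot_iff.mp (h ▸ hle))
  exact ⟨⟨𝔭, h𝔭.isPrime, hne⟩, Ideal.dvd_iff_le.mpr hle, rfl⟩

theorem Ideal.exists_notMem_forall_mem_of_forall_not_le {𝔭 : Ideal R} (h𝔭 : 𝔭.IsPrime)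
    {T : Finset (Ideal R)} (hT : ∀ 𝔮 ∈ T, ¬ 𝔮 ≤ 𝔭) : ∃ e ∉ 𝔭, ∀ 𝔮 ∈ T, e ∈ 𝔮 := by
  have hinf : ¬ T.inf id ≤ 𝔭 := fun hle => by
    obtain ⟨𝔮, h𝔮, hle⟩ := h𝔭.inf_le'.mp hle
    exact hT 𝔮 h𝔮 hle
  obtain ⟨e, heT, he𝔭⟩ := SetLike.not_le_iff_exists.mp hinf
  exact ⟨e, he𝔭, fun 𝔮 h𝔮 => Finset.inf_le (f := id) h𝔮 heT⟩

theorem Module.End.injective_of_smul_mem_range {M : Type*} [AddCommGroup M] [Module R M]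
    [IsNoetherian R M] (β : Module.End R M) {c : R}
    (hc : IsSMulRegular M c) (h : ∀ x, c • x ∈ LinearMap.range β) : Function.Injective β := by
  have hpow : ∀ (n : ℕ) (x : M), c ^ n • x ∈ LinearMap.range (β ^ n) := by
    intro n
    induction n with
    | zero => simp
    | succ n ih =>
      intro x
      obtain ⟨m, hm⟩ := h x
      obtain ⟨m', hm'⟩ := ih m
      refine ⟨m', ?_⟩
      rw [pow_succ' β, Module.End.mul_apply, hm', map_smul, hm, ← mul_smul, ← pow_succ]
  obtain ⟨n, hn⟩ := Filter.eventually_atTop.mp β.eventually_disjoint_ker_pow_range_pow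
  refine (injective_iff_map_eq_zero β).mpr fun x hx => (hc.pow (n + 1)).right_eq_zero_of_smul ?_
  have hker : c ^ (n + 1) • x ∈ LinearMap.ker (β ^ (n + 1)) := by
    rw [LinearMap.mem_ker, map_smul, pow_succ β, Module.End.mul_apply, hx, map_zero, smul_zero]
  exact disjoint_def.mp (hn (n + 1) n.le_succ) _ hker (hpow _ x)

section Lattices

variable {S M N : Type*} [Ring S] [Algebra R S] [AddCommGroup M] [Module S M]
  [AddCommGroup N] [Module S N] [Module R N] [IsScalarTower R S N]

theorem Submodule.mem_annihilator_quotient_iff (p : Submodule S N) {r : R} :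
    r ∈ Module.annihilator R (N ⧸ p) ↔ ∀ y : N, r • y ∈ p := by
  rw [← (Quotient.restrictScalarsEquiv R p).annihilator_eq, annihilator_quotient, mem_colon]
  simp

theorem Submodule.annihilator_quotient_not_le_of_smul_mem_sup [Module.Finite R N]
    (p : Submodule S N) {𝔭 : Ideal R} (h𝔭 : 𝔭.IsMaximal) {t : R} (ht : t ∉ 𝔭)
    (h : ∀ y : N, t • y ∈ p.restrictScalars R ⊔ 𝔭 • ⊤) :
    ¬ Module.annihilator R (N ⧸ p) ≤ 𝔭 := by
  obtain ⟨a, i, hi, hati⟩ := h𝔭.exists_inv ht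
  have htop : (⊤ : Submodule R N) ≤ p.restrictScalars R ⊔ 𝔭 • ⊤ := fun y _ => by
    rw [← one_smul R y, ← hati, add_smul, ← smul_smul]
    exact add_mem (smul_mem _ a (h y)) (mem_sup_right (smul_mem_smul hi trivial))
  obtain ⟨r, hr1, hr⟩ :=
    exists_sub_one_mem_and_smul_le_of_fg_of_le_sup Module.Finite.fg_top le_rfl htop
  have hr𝔭 : r ∉ 𝔭 := fun hr𝔭 =>
    h𝔭.ne_top ((Ideal.eq_top_iff_one _).mpr (by simpa using sub_mem hr𝔭 hr1))
  refine fun hle => hr𝔭 (hle ((mem_annihilator_quotient_iff p).mpr fun y => ?_))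
  exact hr (smul_mem_pointwise_smul y r ⊤ trivial)

theorem exists_linearMap_annihilator_quotient_range_not_le [Module.Finite R N]
    {T : Finset (Ideal R)} (hT : ∀ 𝔭 ∈ T, 𝔭.IsMaximal)
    (hloc : ∀ 𝔭 ∈ T, ∃ (f : M →ₗ[S] N) (g : N →ₗ[S] M) (s : R), s ∉ 𝔭 ∧ ∀ y, f (g y) = s • y) :
    ∃ φ : M →ₗ[S] N, ∀ 𝔭 ∈ T, ¬ Module.annihilator R (N ⧸ LinearMap.range φ) ≤ 𝔭 := by
  choose! f g s hs hfg using hloc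
  have hsep : ∀ 𝔭 ∈ T, ∃ e ∉ 𝔭, ∀ 𝔮 ∈ T.erase 𝔭, e ∈ 𝔮 := fun 𝔭 h𝔭 =>
    Ideal.exists_notMem_forall_mem_of_forall_not_le (hT 𝔭 h𝔭).isPrime fun 𝔮 h𝔮 hle =>
      Finset.ne_of_mem_erase h𝔮
        ((hT 𝔮 (Finset.mem_of_mem_erase h𝔮)).eq_of_le (hT 𝔭 h𝔭).ne_top hle)
  choose! e he hesep using hsep
  refine ⟨∑ 𝔮 ∈ T, e 𝔮 • f 𝔮, fun 𝔭 h𝔭 => ?_⟩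
  refine annihilator_quotient_not_le_of_smul_mem_sup _ (hT 𝔭 h𝔭)
    ((hT 𝔭 h𝔭).isPrime.mul_notMem (he 𝔭 h𝔭) (hs 𝔭 h𝔭)) fun y => ?_
  have hsplit : (∑ 𝔮 ∈ T, e 𝔮 • f 𝔮) (g 𝔭 y) =
      (e 𝔭 * s 𝔭) • y + ∑ 𝔮 ∈ T.erase 𝔭, e 𝔮 • f 𝔮 (g 𝔭 y) := by
    rw [LinearMap.sum_apply, ← Finset.add_sum_erase _ _ h𝔭]
    simp [hfg 𝔭 h𝔭, mul_smul]
  have hrest : ∑ 𝔮 ∈ T.erase 𝔭, e 𝔮 • f 𝔮 (g 𝔭 y) ∈ 𝔭 • (⊤ : Submodule R N) :=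
    sum_mem fun 𝔮 h𝔮 => smul_mem_smul (hesep 𝔮 (Finset.mem_of_mem_erase h𝔮) 𝔭
      (Finset.mem_erase.mpr ⟨(Finset.ne_of_mem_erase h𝔮).symm, h𝔭⟩)) trivial
  rw [eq_sub_of_add_eq hsplit.symm]
  exact sub_mem (mem_sup_left (LinearMap.mem_range_self _ _)) (mem_sup_right hrest)

theorem LinearMap.injective_of_mem_annihilator_quotient_range [Module R M] [IsScalarTower R S M]
    [IsNoetherian R M]
    (φ : M →ₗ[S] N) {f : M →ₗ[S] N} {g : N →ₗ[S] M} {s : R} (hs : IsSMulRegular M s)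
    (hgf : ∀ x, g (f x) = s • x) {u : R} (hu : IsSMulRegular M u)
    (hann : u ∈ Module.annihilator R (N ⧸ LinearMap.range φ)) : Function.Injective φ := by
  let β : Module.End R M := (g.restrictScalars R) ∘ₗ (φ.restrictScalars R)
  have hβ : ∀ x, (u * s) • x ∈ LinearMap.range β := fun x => by
    obtain ⟨m, hm⟩ := (mem_annihilator_quotient_iff _).mp hann (f x)
    exact ⟨m, by simp [β, hm, mul_smul, hgf]⟩
  exact Function.Injective.of_comp (f := g) (β.injective_of_smul_mem_range (hu.mul hs) hβ)

end Lattices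

theorem statement3_general (R : Type) [CommRing R] [IsDedekindDomain R]
    (Λ : Type) [Ring Λ] [Algebra R Λ]
    -- M and N are Λ-lattices
    (M N : Type) [AddCommGroup M] [AddCommGroup N]
    [Module Λ M] [Module Λ N] [Module R M] [Module R N]
    [IsScalarTower R Λ M] [IsScalarTower R Λ N]
    [Module.Finite R M] [Module.Finite R N]
    (hMtf : ∀ (r : R) (x : M), r • x = 0 → r = 0 ∨ x = 0)
    -- M and N are in the same genus
    (hgenus : ∀ 𝔭 : Ideal R, 𝔭.IsMaximal →
      ∃ (f : M →ₗ[Λ] N) (g : N →ₗ[Λ] M) (s : R), s ∉ 𝔭 ∧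
        (∀ x : M, g (f x) = s • x) ∧ (∀ y : N, f (g y) = s • y))
    -- 𝔞 is a nonzero ideal of R
    (𝔞 : Ideal R) (h𝔞 : 𝔞 ≠ ⊥) :
    ∃ φ : M →ₗ[Λ] N, Function.Injective φ ∧
      𝔞 ⊔ Module.annihilator R (N ⧸ LinearMap.range φ) = ⊤ := by
  obtain ⟨𝔭₀, h𝔭₀⟩ := Ideal.exists_maximal R
  have hfin := IsDedekindDomain.finite_setOf_isMaximal_le h𝔞
  set T := insert 𝔭₀ hfin.toFinset
  have hT : ∀ 𝔭 ∈ T, 𝔭.IsMaximal := by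
    simp only [T, Finset.forall_mem_insert, Set.Finite.mem_toFinset, Set.mem_ofPred_eq]
    exact ⟨h𝔭₀, fun 𝔭 h𝔭 => h𝔭.1⟩
  obtain ⟨φ, hφ⟩ := exists_linearMap_annihilator_quotient_range_not_le hT fun 𝔭 h𝔭 => by
    obtain ⟨f, g, s, hs, -, hfg⟩ := hgenus 𝔭 (hT 𝔭 h𝔭)
    exact ⟨f, g, s, hs, hfg⟩
  have hreg : ∀ r ∉ 𝔭₀, IsSMulRegular M r := fun r hr =>
    isSMulRegular_iff_right_eq_zero_of_smul.mpr fun x hx =>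
      (hMtf r x hx).resolve_left fun h => hr (h ▸ 𝔭₀.zero_mem)
  obtain ⟨f, g, s, hs, hgf, -⟩ := hgenus 𝔭₀ h𝔭₀
  obtain ⟨u, hu, hu𝔭₀⟩ := SetLike.not_le_iff_exists.mp (hφ 𝔭₀ (Finset.mem_insert_self _ _))
  refine ⟨φ, φ.injective_of_mem_annihilator_quotient_range (hreg s hs) hgf (hreg u hu𝔭₀) hu, ?_⟩
  by_contra hne
  obtain ⟨𝔪, h𝔪, hle⟩ := Ideal.exists_le_maximal _ hne
  have h𝔪T : 𝔪 ∈ T := Finset.mem_insert_of_mem (hfin.mem_toFinset.mpr ⟨h𝔪, le_sup_left.trans hle⟩)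
  exact hφ 𝔪 h𝔪T (le_sup_right.trans hle)

theorem statement3 (R : Type) [CommRing R] [IsDedekindDomain R]
    (K : Type) [Field K] [Algebra R K] [IsFractionRing R K]
    -- A is a finite-dimensional semisimple K-algebra
    (A : Type) [Ring A] [Algebra K A] [FiniteDimensional K A] [IsSemisimpleRing A]
    -- Λ is an R-order in A
    (Λ : Type) [Ring Λ] [Algebra R Λ] [Module.Finite R Λ]
    (jΛ : Λ →+* A) (hjΛ : Function.Injective jΛ)
    (hΛfull : Submodule.span K (Set.range jΛ) = ⊤)
    -- M and N are Λ-lattices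
    (M N : Type) [AddCommGroup M] [AddCommGroup N]
    [Module Λ M] [Module Λ N] [Module R M] [Module R N]
    [IsScalarTower R Λ M] [IsScalarTower R Λ N]
    [Module.Finite R M] [Module.Finite R N]
    (hMtf : ∀ (r : R) (x : M), r • x = 0 → r = 0 ∨ x = 0)
    (hNtf : ∀ (r : R) (y : N), r • y = 0 → r = 0 ∨ y = 0)
    -- M and N are in the same genus
    (hgenus : ∀ 𝔭 : Ideal R, 𝔭.IsMaximal →
      ∃ (f : M →ₗ[Λ] N) (g : N →ₗ[Λ] M) (s : R), s ∉ 𝔭 ∧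
        (∀ x : M, g (f x) = s • x) ∧ (∀ y : N, f (g y) = s • y))
    -- 𝔞 is a nonzero ideal of R
    (𝔞 : Ideal R) (h𝔞 : 𝔞 ≠ ⊥) :
    ∃ φ : M →ₗ[Λ] N, Function.Injective φ ∧
      𝔞 ⊔ Module.annihilator R (N ⧸ LinearMap.range φ) = ⊤ :=
  statement3_general R Λ M N hMtf hgenus 𝔞 h𝔞
end

section
/- Let Δ be a maximal O_F-order in a central division F-algebra D, n ≥ 1, and let 𝔞 be a right ideal of Δ with left order Δ' = O_l(𝔞). Then the set Λ_{𝔞,n} of n×n matrices over D whose entries (i,j) with i,j ≤ n−1 lie in Δ, whose entries (i,n) with i ≤ n−1 lie in 𝔞^{-1}, whose entries (n,j) with j ≤ n−1 lie in 𝔞, and whose (n,n)-entry lies in Δ', is an O_F-order in the matrix algebra M_n(D). -/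
/-!
Replacing `Δ` by the right order `O_r(𝔞) = {x | 𝔞x ⊆ 𝔞}`, the four entry lattices
`O_r(𝔞), 𝔞⁻¹, 𝔞, O_l(𝔞)` multiply like the blocks of a generalized matrix ring
(`L_ik · L_kj ⊆ L_ij`) for every lattice `𝔞`, directly from the definitions; so the matrices
with entries in them form a ring. Maximality of `Δ` enters only to identify `O_r(𝔞)` with `Δ`:
`O_r(𝔞)` is an order containing `Δ`. Each entry lattice contains `𝔞`, so spans `D`, and lies in
one of `a⁻¹𝔞`, `𝔞a⁻¹`, `a⁻¹𝔞a⁻¹` for a nonzero `a ∈ 𝔞`, so is finitely generated.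
-/

open NumberField

noncomputable section

def IsFullLattice (F D : Type) [Field F] [NumberField F] [Ring D] [Algebra F D]
    [Algebra (𝓞 F) D] (M : Submodule (𝓞 F) D) : Prop :=
  M.FG ∧ Submodule.span F (M : Set D) = ⊤

def IsOrder (F D : Type) [Field F] [NumberField F] [Ring D] [Algebra F D]
    [Algebra (𝓞 F) D] (Λ : Subalgebra (𝓞 F) D) : Prop :=
  IsFullLattice F D (Subalgebra.toSubmodule Λ)

def IsMaximalOrder (F D : Type) [Field F] [NumberField F] [Ring D] [Algebra F D]
    [Algebra (𝓞 F) D] (Λ : Subalgebra (𝓞 F) D) : Prop :=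
  IsOrder F D Λ ∧ ∀ Λ' : Subalgebra (𝓞 F) D, IsOrder F D Λ' → Λ ≤ Λ' → Λ' = Λ

/-- The inverse `𝔞⁻¹ = {x ∈ D | 𝔞·x·𝔞 ⊆ 𝔞}`. -/
def invSet {D : Type} [DivisionRing D] (𝔞 : Set D) : Set D :=
  {x | ∀ a ∈ 𝔞, ∀ b ∈ 𝔞, a * x * b ∈ 𝔞}

/-- The left order `O_l(𝔞) = {x ∈ D | x𝔞 ⊆ 𝔞}`. -/
def leftOrderSet {D : Type} [DivisionRing D] (𝔞 : Set D) : Set D :=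
  {x | ∀ a ∈ 𝔞, x * a ∈ 𝔞}

namespace Matrix

variable {R A ι : Type*} [CommRing R] [Ring A] [Algebra R A] [Fintype ι] [DecidableEq ι]

def entrywiseSubalgebra (L : ι → ι → Submodule R A) (hone : ∀ i, 1 ≤ L i i)
    (hmul : ∀ i k j, L i k * L k j ≤ L i j) : Subalgebra R (Matrix ι ι A) where
  carrier := {x | ∀ i j, x i j ∈ L i j}
  mul_mem' {x y} hx hy i j :=
    (L i j).sum_mem fun k _ => hmul i k j (Submodule.mul_mem_mul (hx i k) (hy k j))
  add_mem' hx hy i j := (L i j).add_mem (hx i j) (hy i j)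
  algebraMap_mem' r i j := by
    rw [algebraMap_matrix_apply]
    split_ifs with h
    · exact h ▸ hone i (Submodule.algebraMap_mem r)
    · exact (L i j).zero_mem

variable {L : ι → ι → Submodule R A} {hone : ∀ i, 1 ≤ L i i}
  {hmul : ∀ i k j, L i k * L k j ≤ L i j}

theorem mem_entrywiseSubalgebra {x : Matrix ι ι A} :
    x ∈ entrywiseSubalgebra L hone hmul ↔ ∀ i j, x i j ∈ L i j := Iff.rfl

theorem single_mem_entrywiseSubalgebra {i j : ι} {a : A} (ha : a ∈ L i j) :
    single i j a ∈ entrywiseSubalgebra L hone hmul := by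
  intro k l
  by_cases h : i = k ∧ j = l
  · obtain ⟨rfl, rfl⟩ := h
    simpa using ha
  · rw [single_apply, if_neg h]
    exact (L k l).zero_mem

theorem toSubmodule_entrywiseSubalgebra :
    Subalgebra.toSubmodule (entrywiseSubalgebra L hone hmul) =
      ⨆ p : ι × ι, (L p.1 p.2).map (singleLinearMap R p.1 p.2) := by
  apply le_antisymm
  · intro x hx
    rw [matrix_eq_sum_single x]
    exact Submodule.sum_mem _ fun i _ => Submodule.sum_mem _ fun j _ =>
      Submodule.mem_iSup_of_mem (i, j) ⟨x i j, hx i j, rfl⟩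
  · exact iSup_le fun p => Submodule.map_le_iff_le_comap.mpr fun a ha =>
      single_mem_entrywiseSubalgebra (hone := hone) (hmul := hmul) ha

theorem fg_entrywiseSubalgebra (h : ∀ i j, (L i j).FG) :
    (Subalgebra.toSubmodule (entrywiseSubalgebra L hone hmul)).FG := by
  rw [toSubmodule_entrywiseSubalgebra]
  exact Submodule.fg_iSup _ fun p => (h p.1 p.2).map _

theorem span_entrywiseSubalgebra_eq_top (K : Type*) [Field K] [Algebra K A]
    (h : ∀ i j, Submodule.span K (L i j : Set A) = ⊤) :
    Submodule.span K (entrywiseSubalgebra L hone hmul : Set (Matrix ι ι A)) = ⊤ := by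
  rw [eq_top_iff]
  rintro x -
  rw [matrix_eq_sum_single x]
  refine Submodule.sum_mem _ fun i _ => Submodule.sum_mem _ fun j _ => ?_
  have hx : x i j ∈ Submodule.span K (L i j : Set A) := h i j ▸ Submodule.mem_top
  have hsingle := Submodule.mem_map_of_mem (f := singleLinearMap K i j) hx
  rw [Submodule.map_span] at hsingle
  refine Submodule.span_mono ?_ hsingle
  rintro _ ⟨a, ha, rfl⟩
  exact single_mem_entrywiseSubalgebra ha

end Matrix

/-- Instance search equips `Matrix n n D` over `𝓞 F` with the algebra structure restricted
from `F`, not the entrywise one; over a scalar tower the two agree. -/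
theorem Matrix.algebra_eq_instAlgebra_of_isScalarTower {R K A n : Type*} [CommSemiring R]
    [CommSemiring K] [Semiring A] [Algebra R K] [Algebra K A] [Algebra R A] [IsScalarTower R K A]
    [Fintype n] [DecidableEq n] (P : Algebra R (Matrix n n A))
    (hP : @IsScalarTower R K (Matrix n n A) _ _ P.toSMul) : P = Matrix.instAlgebra := by
  refine Algebra.algebra_ext _ _ fun r => ?_
  rw [@IsScalarTower.algebraMap_apply R K _ _ _ _ _ _ P hP r]
  simp only [Matrix.algebraMap_eq_diagonal, Pi.algebraMap_def, IsScalarTower.algebraMap_apply R K A]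

namespace Submodule

variable {R D : Type} [CommRing R] [DivisionRing D] [Algebra R D] (𝔞 : Submodule R D)

def inverseLattice : Submodule R D where
  carrier := invSet (𝔞 : Set D)
  add_mem' hx hy a ha b hb := by
    simpa only [mul_add, add_mul, SetLike.mem_coe] using 𝔞.add_mem (hx a ha b hb) (hy a ha b hb)
  zero_mem' a _ b _ := by simp
  smul_mem' r x hx a ha b hb := by
    simpa only [mul_smul_comm, smul_mul_assoc, SetLike.mem_coe] using 𝔞.smul_mem r (hx a ha b hb)

def leftOrder : Subalgebra R D where
  carrier := leftOrderSet (𝔞 : Set D)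
  mul_mem' hx hy a ha := by simpa only [mul_assoc] using hx _ (hy a ha)
  add_mem' hx hy a ha := by
    simpa only [add_mul, SetLike.mem_coe] using 𝔞.add_mem (hx a ha) (hy a ha)
  algebraMap_mem' r a ha := by
    simpa only [Algebra.smul_def, SetLike.mem_coe] using 𝔞.smul_mem r ha

def rightOrder : Subalgebra R D where
  carrier := {x | ∀ a ∈ 𝔞, a * x ∈ 𝔞}
  mul_mem' hx hy a ha := by simpa only [mul_assoc] using hy _ (hx a ha)
  add_mem' hx hy a ha := by
    simpa only [mul_add, SetLike.mem_coe] using 𝔞.add_mem (hx a ha) (hy a ha)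
  algebraMap_mem' r a ha := by
    simpa only [Algebra.commutes, Algebra.smul_def] using 𝔞.smul_mem r ha

variable {𝔞}

theorem mem_inverseLattice {x : D} : x ∈ 𝔞.inverseLattice ↔ x ∈ invSet (𝔞 : Set D) := Iff.rfl

theorem mem_leftOrder {x : D} : x ∈ 𝔞.leftOrder ↔ x ∈ leftOrderSet (𝔞 : Set D) := Iff.rfl

variable (𝔞)

theorem leftOrder_mul_le : Subalgebra.toSubmodule 𝔞.leftOrder * 𝔞 ≤ 𝔞 :=
  mul_le.mpr fun _ hx a ha => hx a ha

theorem mul_rightOrder_le : 𝔞 * Subalgebra.toSubmodule 𝔞.rightOrder ≤ 𝔞 :=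
  mul_le.mpr fun a ha _ hx => hx a ha

theorem mul_inverseLattice_le : 𝔞 * 𝔞.inverseLattice ≤ Subalgebra.toSubmodule 𝔞.leftOrder :=
  mul_le.mpr fun a ha _ hx b hb => hx a ha b hb

theorem inverseLattice_mul_le : 𝔞.inverseLattice * 𝔞 ≤ Subalgebra.toSubmodule 𝔞.rightOrder :=
  mul_le.mpr fun _ hx b hb a ha => by simpa only [mul_assoc, SetLike.mem_coe] using hx a ha b hb

theorem inverseLattice_mul_leftOrder_le :
    𝔞.inverseLattice * Subalgebra.toSubmodule 𝔞.leftOrder ≤ 𝔞.inverseLattice :=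
  mul_le.mpr fun _ hx _ hy a ha b hb => by simpa only [mul_assoc] using hx a ha _ (hy b hb)

theorem rightOrder_mul_inverseLattice_le :
    Subalgebra.toSubmodule 𝔞.rightOrder * 𝔞.inverseLattice ≤ 𝔞.inverseLattice :=
  mul_le.mpr fun _ hy _ hx a ha b hb => by simpa only [mul_assoc] using hx _ (hy a ha) b hb

variable {𝔞}

theorem le_leftOrder (h : 𝔞 * 𝔞 ≤ 𝔞) : 𝔞 ≤ Subalgebra.toSubmodule 𝔞.leftOrder :=
  fun _ ha _ hb => h (mul_mem_mul ha hb)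

theorem le_rightOrder (h : 𝔞 * 𝔞 ≤ 𝔞) : 𝔞 ≤ Subalgebra.toSubmodule 𝔞.rightOrder :=
  fun _ hb _ ha => h (mul_mem_mul ha hb)

theorem rightOrder_le_inverseLattice (h : 𝔞 * 𝔞 ≤ 𝔞) :
    Subalgebra.toSubmodule 𝔞.rightOrder ≤ 𝔞.inverseLattice :=
  fun _ hx a ha _ hb => h (mul_mem_mul (hx a ha) hb)

variable [IsNoetherianRing R]

theorem FG.leftOrder (hfg : 𝔞.FG) (hne : 𝔞 ≠ ⊥) : (Subalgebra.toSubmodule 𝔞.leftOrder).FG := by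
  obtain ⟨a, ha, ha0⟩ := exists_mem_ne_zero_of_ne_bot hne
  refine (hfg.map (LinearMap.mulRight R a⁻¹)).of_le fun x hx => ⟨x * a, hx a ha, ?_⟩
  simp [ha0]

theorem FG.rightOrder (hfg : 𝔞.FG) (hne : 𝔞 ≠ ⊥) : (Subalgebra.toSubmodule 𝔞.rightOrder).FG := by
  obtain ⟨a, ha, ha0⟩ := exists_mem_ne_zero_of_ne_bot hne
  refine (hfg.map (LinearMap.mulLeft R a⁻¹)).of_le fun x hx => ⟨a * x, hx a ha, ?_⟩
  simp [ha0]

theorem FG.inverseLattice (hfg : 𝔞.FG) (hne : 𝔞 ≠ ⊥) : 𝔞.inverseLattice.FG := by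
  obtain ⟨a, ha, ha0⟩ := exists_mem_ne_zero_of_ne_bot hne
  refine (hfg.map (LinearMap.mulLeft R a⁻¹ ∘ₗ LinearMap.mulRight R a⁻¹)).of_le
    fun x hx => ⟨a * x * a, hx a ha a ha, ?_⟩
  simp [mul_assoc, ha0]

end Submodule

section BlockOrder

open Submodule

variable {R D ι : Type} [CommRing R] [DivisionRing D] [Algebra R D] [DecidableEq ι]
  (𝔞 : Submodule R D) (e : ι)

def blockLattice (i j : ι) : Submodule R D :=
  if i = e then (if j = e then Subalgebra.toSubmodule 𝔞.leftOrder else 𝔞)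
  else (if j = e then 𝔞.inverseLattice else Subalgebra.toSubmodule 𝔞.rightOrder)

theorem one_le_blockLattice (i : ι) : 1 ≤ blockLattice 𝔞 e i i := by
  rw [Submodule.one_le, blockLattice]
  split_ifs
  exacts [one_mem 𝔞.leftOrder, one_mem 𝔞.rightOrder]

theorem blockLattice_mul_le (i k j : ι) :
    blockLattice 𝔞 e i k * blockLattice 𝔞 e k j ≤ blockLattice 𝔞 e i j := by
  unfold blockLattice
  by_cases hi : i = e <;> by_cases hk : k = e <;> by_cases hj : j = e <;>
    simp only [hi, hk, hj, ↓reduceIte]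
  · exact Submodule.mul_le.mpr fun _ hx _ hy => 𝔞.leftOrder.mul_mem hx hy
  · exact leftOrder_mul_le 𝔞
  · exact mul_inverseLattice_le 𝔞
  · exact mul_rightOrder_le 𝔞
  · exact inverseLattice_mul_leftOrder_le 𝔞
  · exact inverseLattice_mul_le 𝔞
  · exact rightOrder_mul_inverseLattice_le 𝔞
  · exact Submodule.mul_le.mpr fun _ hx _ hy => 𝔞.rightOrder.mul_mem hx hy

theorem mem_blockLattice_iff {i j : ι} {x : D} :
    x ∈ blockLattice 𝔞 e i j ↔
      (i ≠ e → j ≠ e → x ∈ 𝔞.rightOrder) ∧ (i ≠ e → j = e → x ∈ invSet (𝔞 : Set D)) ∧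
        (i = e → j ≠ e → x ∈ 𝔞) ∧ (i = e → j = e → x ∈ leftOrderSet (𝔞 : Set D)) := by
  unfold blockLattice
  by_cases hi : i = e <;> by_cases hj : j = e <;>
    simp [hi, hj, mem_inverseLattice, mem_leftOrder]

variable {𝔞}

theorem le_blockLattice (hmul : 𝔞 * 𝔞 ≤ 𝔞) (i j : ι) : 𝔞 ≤ blockLattice 𝔞 e i j := by
  unfold blockLattice
  split_ifs
  · exact le_leftOrder hmul
  · exact le_rfl
  · exact (le_rightOrder hmul).trans (rightOrder_le_inverseLattice hmul)
  · exact le_rightOrder hmul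

theorem Submodule.FG.blockLattice [IsNoetherianRing R] (hfg : 𝔞.FG) (hne : 𝔞 ≠ ⊥) (i j : ι) :
    (blockLattice 𝔞 e i j).FG := by
  unfold _root_.blockLattice
  split_ifs
  exacts [hfg.leftOrder hne, hfg, hfg.inverseLattice hne, hfg.rightOrder hne]

variable (𝔞) [Fintype ι]

def blockOrder : Subalgebra R (Matrix ι ι D) :=
  Matrix.entrywiseSubalgebra (blockLattice 𝔞 e) (one_le_blockLattice 𝔞 e)
    (blockLattice_mul_le 𝔞 e)

variable {𝔞}

theorem Submodule.FG.blockOrder [IsNoetherianRing R] (hfg : 𝔞.FG) (hne : 𝔞 ≠ ⊥) :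
    (Subalgebra.toSubmodule (blockOrder 𝔞 e)).FG :=
  Matrix.fg_entrywiseSubalgebra (hfg.blockLattice e hne)

theorem span_blockOrder_eq_top (K : Type) [Field K] [Algebra K D] (hmul : 𝔞 * 𝔞 ≤ 𝔞)
    (hspan : Submodule.span K (𝔞 : Set D) = ⊤) :
    Submodule.span K (blockOrder 𝔞 e : Set (Matrix ι ι D)) = ⊤ :=
  Matrix.span_entrywiseSubalgebra_eq_top K fun i j =>
    eq_top_mono (Submodule.span_mono (le_blockLattice e hmul i j)) hspan

end BlockOrder

section Orders

variable {F D : Type} [Field F] [NumberField F] [DivisionRing D] [Algebra F D]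
  [Algebra (𝓞 F) D] {𝔞 : Submodule (𝓞 F) D}

theorem IsFullLattice.ne_bot (h𝔞 : IsFullLattice F D 𝔞) : 𝔞 ≠ ⊥ := by
  rintro rfl
  simpa [Submodule.bot_coe] using h𝔞.2

theorem IsFullLattice.isOrder_rightOrder (h𝔞 : IsFullLattice F D 𝔞) (hmul : 𝔞 * 𝔞 ≤ 𝔞) :
    IsOrder F D 𝔞.rightOrder :=
  ⟨h𝔞.1.rightOrder h𝔞.ne_bot,
    eq_top_mono (Submodule.span_mono (Submodule.le_rightOrder hmul)) h𝔞.2⟩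

theorem IsMaximalOrder.rightOrder_eq {Δ : Subalgebra (𝓞 F) D} (hΔ : IsMaximalOrder F D Δ)
    (h𝔞 : IsFullLattice F D 𝔞) (hmul : 𝔞 * 𝔞 ≤ 𝔞) (hΔ𝔞 : Δ ≤ 𝔞.rightOrder) :
    𝔞.rightOrder = Δ :=
  hΔ.2 _ (h𝔞.isOrder_rightOrder hmul) hΔ𝔞

end Orders

theorem statement6_general (F D : Type) [Field F] [NumberField F] [DivisionRing D] [Algebra F D]
    [Algebra (𝓞 F) D] [IsScalarTower (𝓞 F) F D]
    (Δ : Subalgebra (𝓞 F) D) (hΔ : IsMaximalOrder F D Δ)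
    -- 𝔞 is a right ideal of Δ which is a full O_F-lattice in D
    (𝔞 : Submodule (𝓞 F) D) (h𝔞full : IsFullLattice F D 𝔞)
    (h𝔞Δ : (𝔞 : Set D) ⊆ Δ) (h𝔞right : ∀ a ∈ 𝔞, ∀ x ∈ Δ, a * x ∈ 𝔞)
    (m : ℕ) :
    ∃ Λ : Subalgebra (𝓞 F) (Matrix (Fin (m + 1)) (Fin (m + 1)) D),
      (Λ : Set (Matrix (Fin (m + 1)) (Fin (m + 1)) D)) =
        {x | ∀ i j : Fin (m + 1),
          (i ≠ Fin.last m → j ≠ Fin.last m → x i j ∈ Δ) ∧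
          (i ≠ Fin.last m → j = Fin.last m → x i j ∈ invSet (𝔞 : Set D)) ∧
          (i = Fin.last m → j ≠ Fin.last m → x i j ∈ 𝔞) ∧
          (i = Fin.last m → j = Fin.last m → x i j ∈ leftOrderSet (𝔞 : Set D))} ∧
      IsOrder F (Matrix (Fin (m + 1)) (Fin (m + 1)) D) Λ := by
  have hmul : 𝔞 * 𝔞 ≤ 𝔞 := Submodule.mul_le.mpr fun a ha b hb => h𝔞right a ha b (h𝔞Δ hb)
  have hrightOrder : 𝔞.rightOrder = Δ :=
    hΔ.rightOrder_eq h𝔞full hmul fun x hx a ha => h𝔞right a ha x hx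
  rw [Matrix.algebra_eq_instAlgebra_of_isScalarTower (K := F) (n := Fin (m + 1))
    (RingOfIntegers.instAlgebra F (L := Matrix (Fin (m + 1)) (Fin (m + 1)) D)) inferInstance]
  refine ⟨blockOrder 𝔞 (Fin.last m), ?_, h𝔞full.1.blockOrder _ h𝔞full.ne_bot,
    span_blockOrder_eq_top _ F hmul h𝔞full.2⟩
  ext x
  simp only [SetLike.mem_coe, blockOrder, Matrix.mem_entrywiseSubalgebra, mem_blockLattice_iff,
    hrightOrder, Set.mem_ofPred_eq]

theorem statement6 (F D : Type) [Field F] [NumberField F] [DivisionRing D] [Algebra F D]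
    [Algebra (𝓞 F) D] [IsScalarTower (𝓞 F) F D] [FiniteDimensional F D]
    (hcentral : Subalgebra.center F D = ⊥)
    (Δ : Subalgebra (𝓞 F) D) (hΔ : IsMaximalOrder F D Δ)
    -- 𝔞 is a right ideal of Δ which is a full O_F-lattice in D
    (𝔞 : Submodule (𝓞 F) D) (h𝔞full : IsFullLattice F D 𝔞)
    (h𝔞Δ : (𝔞 : Set D) ⊆ Δ) (h𝔞right : ∀ a ∈ 𝔞, ∀ x ∈ Δ, a * x ∈ 𝔞)
    (m : ℕ) :
    ∃ Λ : Subalgebra (𝓞 F) (Matrix (Fin (m + 1)) (Fin (m + 1)) D),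
      (Λ : Set (Matrix (Fin (m + 1)) (Fin (m + 1)) D)) =
        {x | ∀ i j : Fin (m + 1),
          (i ≠ Fin.last m → j ≠ Fin.last m → x i j ∈ Δ) ∧
          (i ≠ Fin.last m → j = Fin.last m → x i j ∈ invSet (𝔞 : Set D)) ∧
          (i = Fin.last m → j ≠ Fin.last m → x i j ∈ 𝔞) ∧
          (i = Fin.last m → j = Fin.last m → x i j ∈ leftOrderSet (𝔞 : Set D))} ∧
      IsOrder F (Matrix (Fin (m + 1)) (Fin (m + 1)) D) Λ :=
  statement6_general F D Δ hΔ 𝔞 h𝔞full h𝔞Δ h𝔞right m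
end
end

section
/- Let S = (z₁, …, z_n) ∈ GL_n(D) be the matrix whose columns z₁, …, z_n ∈ D^n satisfy N = z₁Δ ⊕ ⋯ ⊕ z_{n−1}Δ ⊕ z_n𝔞 for a full right Δ-lattice N in D^n and a right Δ-ideal 𝔞. Then the left order O_l(N) := {λ ∈ M_n(D) | λN ⊆ N} equals S·Λ_{𝔞,n}·S^{-1}. -/
/-!
Conjugating by `S` reduces the claim to computing the left order of the coordinate lattice
`Δ ⊕ ⋯ ⊕ Δ ⊕ 𝔞`. A matrix `μ` preserves a product of additive groups `∏ Aₖ` iff each entry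
satisfies `μ i k • A k ⊆ A i`, which is tested on the vectors `Pi.single k d`. For the entry in
the last column above the diagonal this reads `μ i k 𝔞 ⊆ Δ`; the step from `𝔞 μ i k 𝔞 ⊆ 𝔞` back
to it uses that the right order `{y | 𝔞 y ⊆ 𝔞}` of `𝔞` is an order containing `Δ`, hence equal to
`Δ` by maximality.
-/

open NumberField

noncomputable section

/-- The underlying set of the nice maximal order `Λ_{𝔞,n}` (with `n = m+1`). -/
def niceOrderSet {F D : Type} [Field F] [NumberField F] [DivisionRing D] [Algebra F D]
    [Algebra (𝓞 F) D] (Δ : Subalgebra (𝓞 F) D) (𝔞 : Submodule (𝓞 F) D) (m : ℕ) :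
    Set (Matrix (Fin (m + 1)) (Fin (m + 1)) D) :=
  {x | ∀ i j : Fin (m + 1),
    (i ≠ Fin.last m → j ≠ Fin.last m → x i j ∈ Δ) ∧
    (i ≠ Fin.last m → j = Fin.last m → x i j ∈ invSet (𝔞 : Set D)) ∧
    (i = Fin.last m → j ≠ Fin.last m → x i j ∈ 𝔞) ∧
    (i = Fin.last m → j = Fin.last m → x i j ∈ leftOrderSet (𝔞 : Set D))}

def Submodule.rightOrder_s8 {R A : Type*} [CommRing R] [Ring A] [Algebra R A] (𝔞 : Submodule R A) :
    Subalgebra R A where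
  carrier := {y | ∀ b ∈ 𝔞, b * y ∈ 𝔞}
  mul_mem' {x y} hx hy b hb := by simpa only [mul_assoc] using hy _ (hx b hb)
  one_mem' b hb := by simpa using hb
  add_mem' {x y} hx hy b hb := by simpa only [mul_add] using 𝔞.add_mem (hx b hb) (hy b hb)
  zero_mem' b _ := by simp
  algebraMap_mem' r b hb := by
    simpa only [← Algebra.commutes r b, ← Algebra.smul_def] using 𝔞.smul_mem r hb

theorem Submodule.rightOrder_fg {R A : Type*} [CommRing R] [IsNoetherianRing R] [DivisionRing A]
    [Algebra R A] {𝔞 : Submodule R A} (hfg : 𝔞.FG) {a : A} (ha : a ∈ 𝔞) (ha0 : a ≠ 0) :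
    (Subalgebra.toSubmodule 𝔞.rightOrder_s8).FG :=
  (hfg.map (LinearMap.mulLeft R a⁻¹)).of_le fun y hy =>
    ⟨a * y, hy a ha, by simp [inv_mul_cancel_left₀ ha0]⟩

section MaximalOrder

variable {F D : Type} [Field F] [NumberField F] [DivisionRing D] [Algebra F D]
  [Algebra (𝓞 F) D]

theorem IsFullLattice.exists_ne_zero {M : Submodule (𝓞 F) D} (hM : IsFullLattice F D M) :
    ∃ a ∈ M, a ≠ 0 := by
  by_contra! h
  have hbot : Submodule.span F (M : Set D) = ⊥ := Submodule.span_eq_bot.mpr h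
  exact top_ne_bot (hM.2.symm.trans hbot)

theorem rightOrder_eq_of_isMaximalOrder {Δ : Subalgebra (𝓞 F) D}
    (hΔ : IsFullLattice F D (Subalgebra.toSubmodule Δ) ∧
      ∀ Δ' : Subalgebra (𝓞 F) D, IsFullLattice F D (Subalgebra.toSubmodule Δ') →
        Δ ≤ Δ' → Δ' = Δ)
    {𝔞 : Submodule (𝓞 F) D} (h𝔞full : IsFullLattice F D 𝔞)
    (h𝔞right : ∀ a ∈ 𝔞, ∀ x ∈ Δ, a * x ∈ 𝔞) :
    𝔞.rightOrder_s8 = Δ := by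
  obtain ⟨a, ha, ha0⟩ := h𝔞full.exists_ne_zero
  have hle : Δ ≤ 𝔞.rightOrder_s8 := fun x hx b hb => h𝔞right b hb x hx
  refine hΔ.2 _ ⟨Submodule.rightOrder_fg h𝔞full.1 ha ha0, ?_⟩ hle
  exact eq_top_iff.mpr (hΔ.1.2 ▸ Submodule.span_mono hle)

end MaximalOrder

namespace Matrix

variable {R n : Type*} [Ring R] [Fintype n] [DecidableEq n]

def leftStabilizer (C : Set (n → R)) : Set (Matrix n n R) :=
  {μ | ∀ c ∈ C, μ *ᵥ c ∈ C}

theorem leftStabilizer_image_mulVec {S T : Matrix n n R} (hST : S * T = 1) (hTS : T * S = 1)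
    (C : Set (n → R)) :
    leftStabilizer (S.mulVec '' C) = (fun μ => S * μ * T) '' leftStabilizer C := by
  have hconj : ∀ μ : Matrix n n R, S * (T * μ * S) * T = μ := fun μ => by
    rw [← Matrix.mul_assoc, ← Matrix.mul_assoc, hST, Matrix.one_mul, Matrix.mul_assoc, hST,
      Matrix.mul_one]
  ext lam
  constructor
  · intro hlam
    refine ⟨T * lam * S, fun c hc => ?_, hconj lam⟩
    obtain ⟨c', hc', hlamc⟩ := hlam _ ⟨c, hc, rfl⟩
    have : (T * lam * S) *ᵥ c = T *ᵥ (lam *ᵥ (S *ᵥ c)) := by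
      rw [mulVec_mulVec, mulVec_mulVec, Matrix.mul_assoc]
    rwa [this, ← hlamc, mulVec_mulVec, hTS, one_mulVec]
  · rintro ⟨μ, hμ, rfl⟩ _ ⟨c, hc, rfl⟩
    refine ⟨μ *ᵥ c, hμ c hc, ?_⟩
    simp only [mulVec_mulVec, Matrix.mul_assoc, hTS, Matrix.mul_one]

theorem mem_leftStabilizer_pi_iff (A : n → AddSubmonoid R) (μ : Matrix n n R) :
    μ ∈ leftStabilizer (Set.univ.pi fun k => (A k : Set R)) ↔
      ∀ i k, ∀ d ∈ A k, μ i k * d ∈ A i := by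
  simp only [leftStabilizer, Set.mem_ofPred_eq, Set.mem_univ_pi, SetLike.mem_coe]
  constructor
  · intro hμ i k d hd
    have hsingle := hμ (Pi.single k d) fun j => by
      rcases eq_or_ne j k with rfl | hj
      · simpa using hd
      · simp [Pi.single_eq_of_ne hj]
    simpa [mulVec, dotProduct_single] using hsingle i
  · intro hμ c hc i
    exact AddSubmonoid.sum_mem _ fun k _ => hμ i k (c k) (hc k)

end Matrix

section NiceOrder

variable {R A : Type*} [CommRing R] [Ring A] [Algebra R A] {Δ : Subalgebra R A}
  {𝔞 : Submodule R A}

def niceLatticeCoord (Δ : Subalgebra R A) (𝔞 : Submodule R A) (m : ℕ) (k : Fin (m + 1)) :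
    AddSubmonoid A :=
  if k = Fin.last m then 𝔞.toAddSubmonoid else Δ.toSubsemiring.toAddSubmonoid

theorem mem_pi_niceLatticeCoord {m : ℕ} {c : Fin (m + 1) → A} :
    c ∈ Set.univ.pi (fun k => (niceLatticeCoord Δ 𝔞 m k : Set A)) ↔
      (∀ j, j ≠ Fin.last m → c j ∈ Δ) ∧ c (Fin.last m) ∈ 𝔞 := by
  simp only [Set.mem_univ_pi, niceLatticeCoord]
  refine ⟨fun h => ⟨fun j hj => by simpa [hj] using h j, by simpa using h (Fin.last m)⟩,
    fun ⟨hΔ, h𝔞⟩ k => ?_⟩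
  split_ifs with hk
  · exact hk ▸ h𝔞
  · exact hΔ k hk

theorem Subalgebra.forall_mul_mem_iff {x : A} : (∀ d ∈ Δ, x * d ∈ Δ) ↔ x ∈ Δ :=
  ⟨fun h => by simpa using h 1 Δ.one_mem, fun hx _ hd => Δ.mul_mem hx hd⟩

theorem forall_mul_mem_iff_of_rightIdeal (h𝔞right : ∀ a ∈ 𝔞, ∀ x ∈ Δ, a * x ∈ 𝔞) {x : A} :
    (∀ d ∈ Δ, x * d ∈ 𝔞) ↔ x ∈ 𝔞 :=
  ⟨fun h => by simpa using h 1 Δ.one_mem, fun hx _ hd => h𝔞right x hx _ hd⟩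

theorem forall_mul_mem_iff_mem_invSet {R : Type*} {D : Type} [CommRing R] [DivisionRing D]
    [Algebra R D] {Δ : Subalgebra R D} {𝔞 : Submodule R D}
    (h𝔞right : ∀ a ∈ 𝔞, ∀ x ∈ Δ, a * x ∈ 𝔞) (horder : 𝔞.rightOrder_s8 = Δ) {x : D} :
    (∀ b ∈ 𝔞, x * b ∈ Δ) ↔ x ∈ invSet (𝔞 : Set D) := by
  refine ⟨fun h a ha b hb => ?_, fun hx b hb => horder ▸ fun a ha => ?_⟩
  · rw [mul_assoc]
    exact h𝔞right a ha _ (h b hb)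
  · rw [← mul_assoc]
    exact hx a ha b hb

end NiceOrder

theorem leftStabilizer_pi_niceLatticeCoord {F D : Type} [Field F] [NumberField F] [DivisionRing D]
    [Algebra F D] [Algebra (𝓞 F) D] {Δ : Subalgebra (𝓞 F) D} {𝔞 : Submodule (𝓞 F) D}
    (h𝔞right : ∀ a ∈ 𝔞, ∀ x ∈ Δ, a * x ∈ 𝔞)
    (horder : 𝔞.rightOrder_s8 = Δ) (m : ℕ) :
    Matrix.leftStabilizer (Set.univ.pi fun k => (niceLatticeCoord Δ 𝔞 m k : Set D)) =
      niceOrderSet Δ 𝔞 m := by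
  ext μ
  rw [Matrix.mem_leftStabilizer_pi_iff]
  refine forall_congr' fun i => forall_congr' fun k => ?_
  by_cases hi : i = Fin.last m <;> by_cases hk : k = Fin.last m <;>
    simp only [niceLatticeCoord, hi, hk, if_true, if_false, ne_eq, not_true_eq_false,
      not_false_eq_true, false_implies, true_implies, and_true, true_and,
      Submodule.mem_toAddSubmonoid, Subalgebra.mem_toSubsemiring,
      Subsemiring.mem_toAddSubmonoid]
  · exact Iff.rfl
  · exact forall_mul_mem_iff_of_rightIdeal h𝔞right
  · exact forall_mul_mem_iff_mem_invSet h𝔞right horder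
  · exact Subalgebra.forall_mul_mem_iff

theorem statement8_general (F D : Type) [Field F] [NumberField F] [DivisionRing D] [Algebra F D]
    [Algebra (𝓞 F) D]
    (Δ : Subalgebra (𝓞 F) D)
    (hΔ : IsFullLattice F D (Subalgebra.toSubmodule Δ) ∧
      ∀ Δ' : Subalgebra (𝓞 F) D, IsFullLattice F D (Subalgebra.toSubmodule Δ') →
        Δ ≤ Δ' → Δ' = Δ)
    -- 𝔞 is a full right Δ-ideal
    (𝔞 : Submodule (𝓞 F) D) (h𝔞full : IsFullLattice F D 𝔞)
    (h𝔞right : ∀ a ∈ 𝔞, ∀ x ∈ Δ, a * x ∈ 𝔞)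
    (m : ℕ)
    -- z₁, …, z_n ∈ D^n are the columns of an invertible matrix S, with inverse T
    (z : Fin (m + 1) → (Fin (m + 1) → D))
    (T : Matrix (Fin (m + 1)) (Fin (m + 1)) D)
    (hST : (Matrix.of fun i j => z j i) * T = 1)
    (hTS : T * (Matrix.of fun i j => z j i) = 1) :
    -- with N := z₁Δ ⊕ ⋯ ⊕ z_{m}Δ ⊕ z_{m+1}𝔞 (the sum is direct since S ∈ GL_n(D)),
    -- the left order O_l(N) equals S·Λ_{𝔞,n}·S⁻¹
    {lam : Matrix (Fin (m + 1)) (Fin (m + 1)) D |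
        ∀ v ∈ {w : Fin (m + 1) → D | ∃ c : Fin (m + 1) → D,
          (∀ j, j ≠ Fin.last m → c j ∈ Δ) ∧ c (Fin.last m) ∈ 𝔞 ∧
          w = fun i => ∑ j, z j i * c j},
        lam.mulVec v ∈ {w : Fin (m + 1) → D | ∃ c : Fin (m + 1) → D,
          (∀ j, j ≠ Fin.last m → c j ∈ Δ) ∧ c (Fin.last m) ∈ 𝔞 ∧
          w = fun i => ∑ j, z j i * c j}} =
      (fun μ => (Matrix.of fun i j => z j i) * μ * T) '' niceOrderSet Δ 𝔞 m := by
  set S : Matrix (Fin (m + 1)) (Fin (m + 1)) D := Matrix.of fun i j => z j i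
  have hN : {w : Fin (m + 1) → D | ∃ c : Fin (m + 1) → D,
      (∀ j, j ≠ Fin.last m → c j ∈ Δ) ∧ c (Fin.last m) ∈ 𝔞 ∧ w = fun i => ∑ j, z j i * c j} =
      S.mulVec '' Set.univ.pi fun k => (niceLatticeCoord Δ 𝔞 m k : Set D) := by
    ext w
    simp only [Set.mem_ofPred_eq, Set.mem_image, mem_pi_niceLatticeCoord, and_assoc]
    exact exists_congr fun c => and_congr_right' (and_congr_right' eq_comm)
  rw [hN]
  change Matrix.leftStabilizer _ = _
  rw [Matrix.leftStabilizer_image_mulVec hST hTS,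
    leftStabilizer_pi_niceLatticeCoord h𝔞right (rightOrder_eq_of_isMaximalOrder hΔ h𝔞full h𝔞right)]

theorem statement8 (F D : Type) [Field F] [NumberField F] [DivisionRing D] [Algebra F D]
    [Algebra (𝓞 F) D] [IsScalarTower (𝓞 F) F D] [FiniteDimensional F D]
    (hcentral : Subalgebra.center F D = ⊥)
    (Δ : Subalgebra (𝓞 F) D)
    (hΔ : IsFullLattice F D (Subalgebra.toSubmodule Δ) ∧
      ∀ Δ' : Subalgebra (𝓞 F) D, IsFullLattice F D (Subalgebra.toSubmodule Δ') →
        Δ ≤ Δ' → Δ' = Δ)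
    -- 𝔞 is a full right Δ-ideal
    (𝔞 : Submodule (𝓞 F) D) (h𝔞full : IsFullLattice F D 𝔞)
    (h𝔞right : ∀ a ∈ 𝔞, ∀ x ∈ Δ, a * x ∈ 𝔞)
    (m : ℕ)
    -- z₁, …, z_n ∈ D^n are the columns of an invertible matrix S, with inverse T
    (z : Fin (m + 1) → (Fin (m + 1) → D))
    (T : Matrix (Fin (m + 1)) (Fin (m + 1)) D)
    (hST : (Matrix.of fun i j => z j i) * T = 1)
    (hTS : T * (Matrix.of fun i j => z j i) = 1) :
    -- with N := z₁Δ ⊕ ⋯ ⊕ z_{m}Δ ⊕ z_{m+1}𝔞 (the sum is direct since S ∈ GL_n(D)),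
    -- the left order O_l(N) equals S·Λ_{𝔞,n}·S⁻¹
    {lam : Matrix (Fin (m + 1)) (Fin (m + 1)) D |
        ∀ v ∈ {w : Fin (m + 1) → D | ∃ c : Fin (m + 1) → D,
          (∀ j, j ≠ Fin.last m → c j ∈ Δ) ∧ c (Fin.last m) ∈ 𝔞 ∧
          w = fun i => ∑ j, z j i * c j},
        lam.mulVec v ∈ {w : Fin (m + 1) → D | ∃ c : Fin (m + 1) → D,
          (∀ j, j ≠ Fin.last m → c j ∈ Δ) ∧ c (Fin.last m) ∈ 𝔞 ∧
          w = fun i => ∑ j, z j i * c j}} =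
      (fun μ => (Matrix.of fun i j => z j i) * μ * T) '' niceOrderSet Δ 𝔞 m :=
  statement8_general F D Δ hΔ 𝔞 h𝔞full h𝔞right m z T hST hTS
end
end
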